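/- For fixed n and m, identify a family (f₁,…,f_m) of vectors in ℂⁿ with a point of (ℂⁿ)^m. Then the set of m-tuples (f₁,…,f_m) ∈ (ℂⁿ)^m that are phase retrievable for ℂⁿ is an open subset of (ℂⁿ)^m (with its standard topology). In particular, the phase retrievability property is stable under sufficiently small perturbations of the frame vectors. -/

import Mathlib

/-!
If `|⟪f k, x⟫| = |⟪f k, y⟫|` for all `k`, the same holds for `u = x + q y`, `v = q̄ x + y`
whenever `|q| < 1`, since the measurement differences only get multiplied by `1 - |q|²`; if
moreover `x` is not a unimodular multiple of `y`, a suitable such `q` makes `u ⟂ v` with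
`(u, v) ≠ 0`. Conversely, a nonzero orthogonal pair is never related by a phase. So `f` is phase
retrievable iff every pair in the compact set of unit-norm orthogonal pairs is separated by some
`f k`, an open condition on `f` by the tube lemma.
-/

open Finset

/-- Standard inner product on `ℂⁿ`, linear in the first argument. -/
noncomputable def cip {n : ℕ} (x y : Fin n → ℂ) : ℂ := ∑ i, x i * starRingEnd ℂ (y i)

open scoped InnerProductSpace ComplexConjugate

theorem exists_abs_mul_lt_one_quadratic_eq_zero (t σ : ℝ) (ht : 0 ≤ t) (hσ : 2 * t < σ) :
    ∃ l : ℝ, |l| * t < 1 ∧ 1 + l * σ + l ^ 2 * t ^ 2 = 0 := by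
  have hD : 0 ≤ σ ^ 2 - 4 * t ^ 2 := by nlinarith
  have hsq := Real.sq_sqrt hD
  have hpos : 0 < σ + √(σ ^ 2 - 4 * t ^ 2) :=
    add_pos_of_pos_of_nonneg (by linarith) (Real.sqrt_nonneg _)
  -- the root `(-σ + √(σ² - 4t²)) / (2t²)`, rationalized so that it also makes sense for `t = 0`
  refine ⟨-2 / (σ + √(σ ^ 2 - 4 * t ^ 2)), ?_, ?_⟩
  · rw [abs_div, abs_neg, abs_two, abs_of_pos hpos, div_mul_eq_mul_div, div_lt_one hpos]
    linarith [Real.sqrt_nonneg (σ ^ 2 - 4 * t ^ 2)]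
  · field_simp
    linear_combination hsq

theorem norm_add_mul_sq_sub_norm_conj_mul_add_sq (α β q : ℂ) :
    ‖α + q * β‖ ^ 2 - ‖conj q * α + β‖ ^ 2 = (1 - ‖q‖ ^ 2) * (‖α‖ ^ 2 - ‖β‖ ^ 2) := by
  simp only [Complex.sq_norm, Complex.normSq_apply, Complex.add_re, Complex.add_im,
    Complex.mul_re, Complex.mul_im, Complex.conj_re, Complex.conj_im]
  ring

section InnerProductSpace

variable {E : Type*} [NormedAddCommGroup E] [InnerProductSpace ℂ E]

def IsPhaseRetrievable {ι : Type*} (f : ι → E) : Prop :=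
  ∀ x y : E, (∀ k, ‖⟪f k, x⟫_ℂ‖ = ‖⟪f k, y⟫_ℂ‖) → ∃ c : ℂ, ‖c‖ = 1 ∧ x = c • y

theorem norm_inner_add_smul_eq_norm_inner_conj_smul_add {g x y : E} (h : ‖⟪g, x⟫_ℂ‖ = ‖⟪g, y⟫_ℂ‖) (q : ℂ) :
    ‖⟪g, x + q • y⟫_ℂ‖ = ‖⟪g, conj q • x + y⟫_ℂ‖ := by
  have key := norm_add_mul_sq_sub_norm_conj_mul_add_sq ⟪g, x⟫_ℂ ⟪g, y⟫_ℂ q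
  rw [h, sub_self, mul_zero, sub_eq_zero] at key
  rw [inner_add_right, inner_add_right, inner_smul_right, inner_smul_right]
  exact (sq_eq_sq₀ (norm_nonneg _) (norm_nonneg _)).mp key

theorem exists_norm_eq_one_norm_sub_smul_sq (x y : E) :
    ∃ c : ℂ, ‖c‖ = 1 ∧ ‖x - c • y‖ ^ 2 = ‖x‖ ^ 2 + ‖y‖ ^ 2 - 2 * ‖⟪x, y⟫_ℂ‖ := by
  set s := ⟪x, y⟫_ℂ
  refine ⟨Complex.exp (-(s.arg : ℂ) * Complex.I), ?_, ?_⟩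
  · exact_mod_cast Complex.norm_exp_ofReal_mul_I (-s.arg)
  · have hcs : Complex.exp (-(s.arg : ℂ) * Complex.I) * s = ‖s‖ := by
      conv_lhs => rw [← Complex.norm_mul_exp_arg_mul_I s]
      rw [mul_left_comm, ← Complex.exp_add]
      simp
    rw [norm_sub_sq (𝕜 := ℂ), inner_smul_right, hcs, norm_smul,
      show ‖Complex.exp (-(s.arg : ℂ) * Complex.I)‖ = 1 by
        exact_mod_cast Complex.norm_exp_ofReal_mul_I (-s.arg)]
    simp only [RCLike.re_to_complex, Complex.ofReal_re, one_mul]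
    ring

theorem exists_norm_lt_one_inner_add_smul_eq_zero {x y : E}
    (hxy : ∀ c : ℂ, ‖c‖ = 1 → x ≠ c • y) :
    ∃ q : ℂ, ‖q‖ < 1 ∧ ⟪x + q • y, conj q • x + y⟫_ℂ = 0 := by
  set s := ⟪x, y⟫_ℂ
  obtain ⟨c, hc, hsub⟩ := exists_norm_eq_one_norm_sub_smul_sq x y
  have hlt : 2 * ‖s‖ < ‖x‖ ^ 2 + ‖y‖ ^ 2 := by
    have := norm_pos_iff.2 (sub_ne_zero.2 (hxy c hc))
    nlinarith
  obtain ⟨l, hl, hroot⟩ := exists_abs_mul_lt_one_quadratic_eq_zero _ _ (norm_nonneg s) hlt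
  -- with `q̄ = l s`, `⟪x + q y, q̄ x + y⟫ = s (1 + l (‖x‖² + ‖y‖²) + l² ‖s‖²)`
  refine ⟨l * conj s, by simpa [Complex.norm_real] using hl, ?_⟩
  have hss : s * conj s = (‖s‖ : ℂ) ^ 2 := by
    rw [Complex.mul_conj, Complex.normSq_eq_norm_sq]; push_cast; rfl
  simp only [inner_add_left, inner_add_right, inner_smul_left, inner_smul_right,
    inner_self_eq_norm_sq_to_K, map_mul, Complex.conj_ofReal, Complex.conj_conj]
  have hyx : ⟪y, x⟫_ℂ = conj s := (inner_conj_symm y x).symm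
  have hroot' : (1 : ℂ) + l * (‖x‖ ^ 2 + ‖y‖ ^ 2) + l ^ 2 * ‖s‖ ^ 2 = 0 := by
    exact_mod_cast hroot
  linear_combination s * hroot' + (l : ℂ) ^ 2 * s ^ 2 * hyx + (l : ℂ) ^ 2 * s * hss

theorem eq_zero_of_add_smul_eq_zero {x y : E} {q : ℂ} (hq : ‖q‖ < 1)
    (hu : x + q • y = 0) (hv : conj q • x + y = 0) : x = 0 := by
  have hx : ((1 : ℂ) - q * conj q) • x = 0 := by
    rw [sub_smul, one_smul, mul_smul, eq_neg_of_add_eq_zero_left hv, smul_neg, sub_neg_eq_add, hu]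
  refine (smul_eq_zero.1 hx).resolve_left (sub_ne_zero.2 (Ne.symm ?_))
  rw [Complex.mul_conj, Complex.normSq_eq_norm_sq]
  exact_mod_cast (pow_lt_one₀ (norm_nonneg q) hq two_ne_zero).ne

variable (E) in
def unitOrthogonalPairs : Set (E × E) := Metric.sphere 0 1 ∩ {p | ⟪p.1, p.2⟫_ℂ = 0}

theorem isCompact_unitOrthogonalPairs [FiniteDimensional ℂ E] :
    IsCompact (unitOrthogonalPairs E) :=
  (isCompact_sphere 0 1).inter_right (isClosed_eq (by fun_prop) continuous_const)

theorem isPhaseRetrievable_iff_forall_unitOrthogonalPairs {ι : Type*} {f : ι → E} :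
    IsPhaseRetrievable f ↔
      ∀ p ∈ unitOrthogonalPairs E, ∃ k, ‖⟪f k, p.1⟫_ℂ‖ ≠ ‖⟪f k, p.2⟫_ℂ‖ := by
  constructor
  · rintro hf p ⟨hp, horth⟩
    by_contra! hmeas
    obtain ⟨c, hc, h12⟩ := hf _ _ hmeas
    have hc0 : c ≠ 0 := by rintro rfl; simp at hc
    rw [Set.mem_ofPred_eq, h12, inner_smul_left] at horth
    have h2 : p.2 = 0 :=
      inner_self_eq_zero.1 ((mul_eq_zero.1 horth).resolve_left (by simpa using hc0))
    have hp0 : p = 0 := Prod.ext (by rw [h12, h2, smul_zero]; rfl) h2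
    simp [hp0] at hp
  · intro h x y hxy
    by_contra! hne
    obtain ⟨q, hq, horth⟩ := exists_norm_lt_one_inner_add_smul_eq_zero hne
    obtain ⟨p, hp1, hp2⟩ : ∃ p : E × E, p.1 = x + q • y ∧ p.2 = conj q • x + y :=
      ⟨(x + q • y, conj q • x + y), rfl, rfl⟩
    have hp : p ≠ 0 := by
      intro hp0
      rw [hp0] at hp1 hp2
      have hx := eq_zero_of_add_smul_eq_zero hq hp1.symm hp2.symm
      rw [hx, smul_zero, zero_add] at hp2
      exact hne 1 (by simp) (by simp [hx, ← hp2])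
    obtain ⟨k, hk⟩ := h ((‖p‖⁻¹ : ℂ) • p) ⟨by simp [norm_smul, hp], by
      rw [Set.mem_ofPred_eq, Prod.smul_fst, Prod.smul_snd, inner_smul_left, inner_smul_right,
        hp1, hp2, horth, mul_zero, mul_zero]⟩
    apply hk
    rw [Prod.smul_fst, Prod.smul_snd, inner_smul_right, inner_smul_right, norm_mul, norm_mul,
      hp1, hp2, norm_inner_add_smul_eq_norm_inner_conj_smul_add (hxy k)]

theorem isOpen_setOf_forall_mem_of_isCompact {X Y : Type*} [TopologicalSpace X]
    [TopologicalSpace Y] {K : Set Y} (hK : IsCompact K) {U : Set (X × Y)} (hU : IsOpen U) :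
    IsOpen {x | ∀ y ∈ K, (x, y) ∈ U} :=
  isOpen_iff_eventually.2 fun _ hx ↦
    hK.eventually_forall_of_forall_eventually fun y hy ↦ hU.mem_nhds (hx y hy)

theorem isOpen_setOf_isPhaseRetrievable [FiniteDimensional ℂ E] {ι : Type*} :
    IsOpen {f : ι → E | IsPhaseRetrievable f} := by
  simp_rw [isPhaseRetrievable_iff_forall_unitOrthogonalPairs]
  refine isOpen_setOf_forall_mem_of_isCompact isCompact_unitOrthogonalPairs
    (U := {q : (ι → E) × (E × E) | ∃ k, ‖⟪q.1 k, q.2.1⟫_ℂ‖ ≠ ‖⟪q.1 k, q.2.2⟫_ℂ‖}) ?_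
  simp_rw [Set.ofPred_exists]
  exact isOpen_iUnion fun k ↦ isOpen_ne_fun (by fun_prop) (by fun_prop)

end InnerProductSpace

theorem cip_eq_inner {n : ℕ} (x y : Fin n → ℂ) :
    cip x y = ⟪WithLp.toLp 2 y, WithLp.toLp 2 x⟫_ℂ := by
  simp [cip, PiLp.inner_apply]

theorem isPhaseRetrievable_toLp_iff {n : ℕ} {ι : Type*} (f : ι → Fin n → ℂ) :
    IsPhaseRetrievable (fun k ↦ WithLp.toLp 2 (f k)) ↔
      ∀ x y : Fin n → ℂ, (∀ k, ‖cip x (f k)‖ = ‖cip y (f k)‖) → ∃ c : ℂ, ‖c‖ = 1 ∧ x = c • y := by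
  simp only [IsPhaseRetrievable, cip_eq_inner, (WithLp.equiv 2 (Fin n → ℂ)).symm.forall_congr_left]
  simp [(WithLp.toLp_injective 2).eq_iff]

theorem isOpen_phase_retrievable (n m : ℕ) :
    IsOpen {f : Fin m → (Fin n → ℂ) |
      ∀ x y : Fin n → ℂ,
        (∀ k, ‖cip x (f k)‖ = ‖cip y (f k)‖) →
        ∃ c : ℂ, ‖c‖ = 1 ∧ x = c • y} := by
  simp_rw [← isPhaseRetrievable_toLp_iff]
  exact isOpen_setOf_isPhaseRetrievable.preimage (by fun_prop)
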